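/- Let (M, h̃) be a Riemannian manifold, φ > 0 smooth, and h = φ^{4/(n−2)} h̃ the conformally rescaled metric (n ≥ 3). If B is a symmetric 2-tensor that is trace-free with respect to h̃ (equivalently with respect to h), then the divergences satisfy D_h^a (φ^{−2} B_{ab}) = φ^{−2−4/(n−2)} D_{h̃}^a B_{ab}. In particular, φ^{−2}B is divergence-free with respect to h if and only if B is divergence-free with respect to h̃. -/

import Mathlib

noncomputable section

open scoped BigOperators

/-- Partial derivative of `f` in the `μ`-th coordinate direction. -/
def pd {n : ℕ} (μ : Fin n) (f : (Fin n → ℝ) → ℝ) (x : Fin n → ℝ) : ℝ :=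
  fderiv ℝ f x (Pi.single μ 1)

/-- Christoffel symbols `Γ^k_{ij}` of the metric `g` in coordinates. -/
def Christoffel {n : ℕ} (g : (Fin n → ℝ) → Matrix (Fin n) (Fin n) ℝ)
    (x : Fin n → ℝ) (k i j : Fin n) : ℝ :=
  (1 / 2) * ∑ l, (g x)⁻¹ k l *
    (pd i (fun y => g y l j) x + pd j (fun y => g y l i) x - pd l (fun y => g y i j) x)

/-- Riemann curvature tensor `R^a_{bcd}` of the metric `g`. -/
def RiemannUp {n : ℕ} (g : (Fin n → ℝ) → Matrix (Fin n) (Fin n) ℝ)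
    (x : Fin n → ℝ) (a b c d : Fin n) : ℝ :=
  pd c (fun y => Christoffel g y a b d) x - pd d (fun y => Christoffel g y a b c) x
    + ∑ e, Christoffel g x a e c * Christoffel g x e b d
    - ∑ e, Christoffel g x a e d * Christoffel g x e b c

/-- Ricci tensor `R_{ij} = R^a_{iaj}` of the metric `g`. -/
def RicciTensor {n : ℕ} (g : (Fin n → ℝ) → Matrix (Fin n) (Fin n) ℝ)
    (x : Fin n → ℝ) (i j : Fin n) : ℝ :=
  ∑ a, RiemannUp g x a i a j

/-- Scalar curvature `R = g^{ij} R_{ij}` of the metric `g`. -/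
def scalarCurv {n : ℕ} (g : (Fin n → ℝ) → Matrix (Fin n) (Fin n) ℝ)
    (x : Fin n → ℝ) : ℝ :=
  ∑ i, ∑ j, (g x)⁻¹ i j * RicciTensor g x i j


/-- Divergence of a symmetric 2-covariant tensor field:
`(div_g T)_b = g^{ac} ∇_c T_{ab}`. -/
def divTensor {n : ℕ} (g : (Fin n → ℝ) → Matrix (Fin n) (Fin n) ℝ)
    (T : (Fin n → ℝ) → Fin n → Fin n → ℝ) (x : Fin n → ℝ) (b : Fin n) : ℝ :=
  ∑ a, ∑ c, (g x)⁻¹ a c *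
    (pd c (fun y => T y a b) x - ∑ d, Christoffel g x d c a * T x d b
      - ∑ d, Christoffel g x d c b * T x a d)

lemma pd_mul {n : ℕ} (μ : Fin n) {f g : (Fin n → ℝ) → ℝ} {x : Fin n → ℝ}
    (hf : DifferentiableAt ℝ f x) (hg : DifferentiableAt ℝ g x) :
    pd μ (fun y => f y * g y) x = pd μ f x * g x + f x * pd μ g x := by
  have h := (hf.hasFDerivAt.mul hg.hasFDerivAt).fderiv
  simp only [pd, show (fun y => f y * g y) = f * g from rfl, h]
  simp only [ContinuousLinearMap.add_apply, ContinuousLinearMap.smul_apply, smul_eq_mul]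
  ring

lemma pd_rpow {n : ℕ} (μ : Fin n) {f : (Fin n → ℝ) → ℝ} {x : Fin n → ℝ}
    (hf : DifferentiableAt ℝ f x) (hx : f x ≠ 0) (p : ℝ) :
    pd μ (fun y => f y ^ p) x = p * f x ^ (p - 1) * pd μ f x := by
  have h := (hf.hasFDerivAt.rpow_const (p := p) (Or.inl hx)).fderiv
  simp only [pd, h]
  simp [mul_assoc]

/-- Conformal covariance of the divergence on trace-free symmetric 2-tensors:
if `h = φ^{4/(n−2)} g̃` and `B` is trace-free, then
`D_h^a(φ^{−2}B_{ab}) = φ^{−2−4/(n−2)} D_{g̃}^a B_{ab}`; in particular `φ^{−2}B` is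
divergence-free for `h` iff `B` is divergence-free for `g̃`. -/
theorem conformal_divergence_tracefree (n : ℕ) (hn : 3 ≤ n)
    (gTil : (Fin n → ℝ) → Matrix (Fin n) (Fin n) ℝ)
    (hgsmooth : ∀ i j, ContDiff ℝ (⊤ : ℕ∞) fun y => gTil y i j)
    (hgsymm : ∀ y, (gTil y).IsSymm)
    (hgpos : ∀ y, (gTil y).PosDef)
    (φ : (Fin n → ℝ) → ℝ) (hφpos : ∀ y, 0 < φ y) (hφ : ContDiff ℝ (⊤ : ℕ∞) φ)
    (B : (Fin n → ℝ) → Fin n → Fin n → ℝ)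
    (hBsmooth : ∀ a b, ContDiff ℝ (⊤ : ℕ∞) fun y => B y a b)
    (hBsymm : ∀ y a b, B y a b = B y b a)
    (hBtracefree : ∀ y, ∑ a, ∑ b, (gTil y)⁻¹ a b * B y a b = 0) :
    (∀ x b, divTensor (fun y => (φ y ^ ((4 : ℝ) / ((n : ℝ) - 2))) • gTil y)
        (fun y a c => (φ y) ^ (-(2 : ℝ)) * B y a c) x b =
      (φ x) ^ (-(2 : ℝ) - (4 : ℝ) / ((n : ℝ) - 2)) * divTensor gTil B x b) ∧
    (∀ x, (∀ b, divTensor (fun y => (φ y ^ ((4 : ℝ) / ((n : ℝ) - 2))) • gTil y)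
          (fun y a c => (φ y) ^ (-(2 : ℝ)) * B y a c) x b = 0) ↔
        (∀ b, divTensor gTil B x b = 0)) := by
  have hn3 : (3:ℝ) ≤ (n:ℝ) := by exact_mod_cast hn
  have hn2 : (n:ℝ) - 2 ≠ 0 := by linarith
  set r : ℝ := (4:ℝ) / ((n:ℝ) - 2) with hrdef
  have hrn : r * ((n:ℝ) - 2) = 4 := by
    rw [hrdef]; field_simp
  have main : ∀ x b, divTensor (fun y => (φ y ^ r) • gTil y)
      (fun y a c => (φ y) ^ (-(2 : ℝ)) * B y a c) x b =
      (φ x) ^ (-(2 : ℝ) - r) * divTensor gTil B x b := by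
    intro x b
    have hφx : (0:ℝ) < φ x := hφpos x
    have hφne : φ x ≠ 0 := ne_of_gt hφx
    have hφd : DifferentiableAt ℝ φ x := (hφ.differentiable (by simp)).differentiableAt
    have hgd : ∀ i j : Fin n, DifferentiableAt ℝ (fun y => gTil y i j) x :=
      fun i j => ((hgsmooth i j).differentiable (by simp)).differentiableAt
    have hBd : ∀ a c : Fin n, DifferentiableAt ℝ (fun y => B y a c) x :=
      fun a c => ((hBsmooth a c).differentiable (by simp)).differentiableAt
    have hψpos : (0:ℝ) < φ x ^ r := Real.rpow_pos_of_pos hφx r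
    have hψne : φ x ^ r ≠ 0 := ne_of_gt hψpos
    have hdet : IsUnit (gTil x).det := isUnit_iff_ne_zero.mpr (ne_of_gt (hgpos x).det_pos)
    have key1 : ∀ k j : Fin n, ∑ l, (gTil x)⁻¹ k l * gTil x l j = if k = j then 1 else 0 := by
      intro k j
      rw [← Matrix.mul_apply, Matrix.nonsing_inv_mul _ hdet]
      simp [Matrix.one_apply]
    have hAinvsymm : ∀ i j : Fin n, (gTil x)⁻¹ i j = (gTil x)⁻¹ j i := by
      have hsy : Matrix.transpose (gTil x)⁻¹ = (gTil x)⁻¹ := by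
        rw [Matrix.transpose_nonsing_inv, (hgsymm x).eq]
      intro i j
      have h5 := congrFun (congrFun hsy i) j
      simpa [Matrix.transpose_apply] using h5.symm
    have hinv : ((φ x ^ r) • gTil x)⁻¹ = (φ x ^ r)⁻¹ • (gTil x)⁻¹ := by
      apply Matrix.inv_eq_right_inv
      rw [Matrix.smul_mul, Matrix.mul_smul, smul_smul, mul_inv_cancel₀ hψne, one_smul,
        Matrix.mul_nonsing_inv _ hdet]
    set u : Fin n → ℝ := fun c => r * (φ x)⁻¹ * pd c φ x with hu
    set w : Fin n → ℝ := fun c => φ x ^ (-(3:ℝ)) * pd c φ x with hw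
    have hsu : ∀ c, φ x ^ (-(2:ℝ)) * u c = r * w c := by
      intro c
      have h1 : φ x ^ (-(2:ℝ)) * (φ x)⁻¹ = φ x ^ (-(3:ℝ)) := by
        rw [← Real.rpow_neg_one (φ x), ← Real.rpow_add hφx]
        norm_num
      simp only [hu, hw]
      calc φ x ^ (-(2:ℝ)) * (r * (φ x)⁻¹ * pd c φ x)
          = r * (φ x ^ (-(2:ℝ)) * (φ x)⁻¹ * pd c φ x) := by ring
        _ = r * (φ x ^ (-(3:ℝ)) * pd c φ x) := by rw [h1]
    set P : Fin n → ℝ := fun d => ∑ l, (gTil x)⁻¹ d l * u l with hP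
    have pdh : ∀ (μ l j : Fin n), pd μ (fun y => φ y ^ r * gTil y l j) x =
        (φ x ^ r) * ((u μ) * gTil x l j)
          + (φ x ^ r) * pd μ (fun y => gTil y l j) x := by
      intro μ l j
      rw [pd_mul μ (hφd.rpow_const (Or.inl hφne)) (hgd l j), pd_rpow μ hφd hφne r]
      have hr1 : φ x ^ (r - 1) = φ x ^ r * (φ x)⁻¹ := by
        rw [Real.rpow_sub_one hφne, div_eq_mul_inv]
      rw [hr1]; simp only [hu]; ring
    have hGam : ∀ k i j : Fin n, Christoffel (fun y => (φ y ^ r) • gTil y) x k i j =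
        Christoffel gTil x k i j + (1/2) *
          ((if k = j then u i else 0) + (if k = i then u j else 0)
            - gTil x i j * P k) := by
      intro k i j
      have expand : Christoffel (fun y => (φ y ^ r) • gTil y) x k i j =
          (1/2) * ∑ l, ((gTil x)⁻¹ k l *
              (pd i (fun y => gTil y l j) x + pd j (fun y => gTil y l i) x
                - pd l (fun y => gTil y i j) x)
            + (u i * ((gTil x)⁻¹ k l * gTil x l j)
              + u j * ((gTil x)⁻¹ k l * gTil x l i)
              - gTil x i j * ((gTil x)⁻¹ k l * u l))) := by
        simp only [Christoffel, hinv, Matrix.smul_apply, smul_eq_mul]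
        congr 1
        apply Finset.sum_congr rfl
        intro l _
        rw [pdh i l j, pdh j l i, pdh l i j]
        field_simp
        ring
      rw [expand]
      simp only [Finset.sum_add_distrib, Finset.sum_sub_distrib, ← Finset.mul_sum, key1]
      simp only [Christoffel, hP, mul_ite, mul_one, mul_zero]
      ring
    have pdT : ∀ (μ a c : Fin n), pd μ (fun y => φ y ^ (-(2:ℝ)) * B y a c) x =
        (-(2:ℝ)) * (w μ * B x a c) + φ x ^ (-(2:ℝ)) * pd μ (fun y => B y a c) x := by
      intro μ a c
      rw [pd_mul μ (hφd.rpow_const (Or.inl hφne)) (hBd a c), pd_rpow μ hφd hφne (-(2:ℝ))]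
      have h3 : (-(2:ℝ)) - 1 = (-(3:ℝ)) := by norm_num
      rw [h3]; simp only [hw]; ring
    set Q : ℝ := ∑ d, P d * B x d b with hQ
    set Ra : Fin n → ℝ := fun a => ∑ d, P d * B x a d with hRa
    -- first Christoffel-contraction
    have h1 : ∀ a c : Fin n,
        ∑ d, Christoffel (fun y => (φ y ^ r) • gTil y) x d c a * (φ x ^ (-(2:ℝ)) * B x d b)
        = φ x ^ (-(2:ℝ)) * (∑ d, Christoffel gTil x d c a * B x d b)
          + (1/2) * ((φ x ^ (-(2:ℝ)) * u c) * B x a b + (φ x ^ (-(2:ℝ)) * u a) * B x c b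
            - gTil x c a * (φ x ^ (-(2:ℝ)) * Q)) := by
      intro a c
      simp only [hGam]
      have hterm : ∀ d : Fin n,
          (Christoffel gTil x d c a + 1/2 * ((if d = a then u c else 0)
            + (if d = c then u a else 0) - gTil x c a * P d)) * (φ x ^ (-(2:ℝ)) * B x d b)
          = φ x ^ (-(2:ℝ)) * (Christoffel gTil x d c a * B x d b)
            + (1/2) * (if d = a then (φ x ^ (-(2:ℝ)) * u c) * B x d b else 0)
            + (1/2) * (if d = c then (φ x ^ (-(2:ℝ)) * u a) * B x d b else 0)
            - (1/2) * (gTil x c a * (φ x ^ (-(2:ℝ)) * (P d * B x d b))) := by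
        intro d
        split_ifs <;> ring
      rw [Finset.sum_congr rfl (fun d _ => hterm d)]
      simp only [Finset.sum_add_distrib, Finset.sum_sub_distrib, ← Finset.mul_sum,
        Finset.sum_ite_eq, Finset.sum_ite_eq', Finset.mem_univ, if_true]
      rw [← hQ]
      ring
    have h2 : ∀ a c : Fin n,
        ∑ d, Christoffel (fun y => (φ y ^ r) • gTil y) x d c b * (φ x ^ (-(2:ℝ)) * B x a d)
        = φ x ^ (-(2:ℝ)) * (∑ d, Christoffel gTil x d c b * B x a d)
          + (1/2) * ((φ x ^ (-(2:ℝ)) * u c) * B x a b + (φ x ^ (-(2:ℝ)) * u b) * B x a c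
            - gTil x c b * (φ x ^ (-(2:ℝ)) * Ra a)) := by
      intro a c
      simp only [hGam]
      have hterm : ∀ d : Fin n,
          (Christoffel gTil x d c b + 1/2 * ((if d = b then u c else 0)
            + (if d = c then u b else 0) - gTil x c b * P d)) * (φ x ^ (-(2:ℝ)) * B x a d)
          = φ x ^ (-(2:ℝ)) * (Christoffel gTil x d c b * B x a d)
            + (1/2) * (if d = b then (φ x ^ (-(2:ℝ)) * u c) * B x a d else 0)
            + (1/2) * (if d = c then (φ x ^ (-(2:ℝ)) * u b) * B x a d else 0)
            - (1/2) * (gTil x c b * (φ x ^ (-(2:ℝ)) * (P d * B x a d))) := by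
        intro d
        split_ifs <;> ring
      rw [Finset.sum_congr rfl (fun d _ => hterm d)]
      simp only [Finset.sum_add_distrib, Finset.sum_sub_distrib, ← Finset.mul_sum,
        Finset.sum_ite_eq, Finset.sum_ite_eq', Finset.mem_univ, if_true]
      have : ∑ d, P d * B x a d = Ra a := by rw [hRa]
      rw [this]
      ring
    -- the main expansion
    have key0 : divTensor (fun y => (φ y ^ r) • gTil y)
        (fun y a c => (φ y) ^ (-(2 : ℝ)) * B y a c) x b
        = ∑ a, ∑ c, ((φ x ^ r)⁻¹ * (gTil x)⁻¹ a c) *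
            (pd c (fun y => φ y ^ (-(2:ℝ)) * B y a b) x
              - (∑ d, Christoffel (fun y => (φ y ^ r) • gTil y) x d c a * (φ x ^ (-(2:ℝ)) * B x d b))
              - (∑ d, Christoffel (fun y => (φ y ^ r) • gTil y) x d c b * (φ x ^ (-(2:ℝ)) * B x a d))) := by
      simp only [divTensor, hinv, Matrix.smul_apply, smul_eq_mul]
    rw [key0]
    have step : ∑ a, ∑ c, ((φ x ^ r)⁻¹ * (gTil x)⁻¹ a c) *
            (pd c (fun y => φ y ^ (-(2:ℝ)) * B y a b) x
              - (∑ d, Christoffel (fun y => (φ y ^ r) • gTil y) x d c a * (φ x ^ (-(2:ℝ)) * B x d b))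
              - (∑ d, Christoffel (fun y => (φ y ^ r) • gTil y) x d c b * (φ x ^ (-(2:ℝ)) * B x a d)))
        = ∑ a, ∑ c,
          (((φ x ^ r)⁻¹ * (φ x ^ (-(2:ℝ)))) * ((gTil x)⁻¹ a c *
              (pd c (fun y => B y a b) x - ∑ d, Christoffel gTil x d c a * B x d b
                - ∑ d, Christoffel gTil x d c b * B x a d))
            + ((φ x ^ r)⁻¹ * (-(2:ℝ) - r)) * ((gTil x)⁻¹ a c * (w c * B x a b))
            + ((φ x ^ r)⁻¹ * (-(r/2))) * ((gTil x)⁻¹ a c * (w a * B x c b))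
            + ((φ x ^ r)⁻¹ * ((φ x ^ (-(2:ℝ)) * Q)/2)) * ((gTil x)⁻¹ a c * gTil x c a)
            + ((φ x ^ r)⁻¹ * (-(φ x ^ (-(2:ℝ)) * u b)/2)) * ((gTil x)⁻¹ a c * B x a c)
            + ((φ x ^ r)⁻¹ * ((φ x ^ (-(2:ℝ)))/2)) * ((gTil x)⁻¹ a c * (gTil x c b * Ra a))) := by
      apply Finset.sum_congr rfl; intro a _
      apply Finset.sum_congr rfl; intro c _
      rw [pdT c a b, h1 a c, h2 a c, hsu c, hsu a]
      ring
    rw [step]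
    simp only [Finset.sum_add_distrib, ← Finset.mul_sum]
    -- evaluate the six pieces
    have hS0 : ∑ a, ∑ c, (gTil x)⁻¹ a c *
        (pd c (fun y => B y a b) x - ∑ d, Christoffel gTil x d c a * B x d b
          - ∑ d, Christoffel gTil x d c b * B x a d) = divTensor gTil B x b := rfl
    have hW2 : ∑ a, ∑ c, (gTil x)⁻¹ a c * (w a * B x c b)
        = ∑ a, ∑ c, (gTil x)⁻¹ a c * (w c * B x a b) := by
      rw [Finset.sum_comm]
      exact Finset.sum_congr rfl fun c _ => Finset.sum_congr rfl fun a _ => by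
        rw [hAinvsymm a c]
    have htrace : ∑ a, ∑ c, (gTil x)⁻¹ a c * gTil x c a = (n:ℝ) := by
      have hone : ∀ a : Fin n, ∑ c, (gTil x)⁻¹ a c * gTil x c a = 1 := by
        intro a; rw [key1 a a]; simp
      rw [Finset.sum_congr rfl (fun a _ => hone a)]
      simp
    have hRR : ∑ a, ∑ c, (gTil x)⁻¹ a c * (gTil x c b * Ra a) = Q := by
      have h4 : ∀ a : Fin n, ∑ c, (gTil x)⁻¹ a c * (gTil x c b * Ra a)
          = (if a = b then 1 else 0) * Ra a := by
        intro a
        rw [← key1 a b, Finset.sum_mul]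
        exact Finset.sum_congr rfl fun c _ => by ring
      rw [Finset.sum_congr rfl (fun a _ => h4 a)]
      simp only [ite_mul, one_mul, zero_mul, Finset.sum_ite_eq', Finset.mem_univ, if_true]
      rw [hRa, hQ]
      exact Finset.sum_congr rfl fun d _ => by rw [hBsymm x b d]
    have hsQ : φ x ^ (-(2:ℝ)) * Q = r * (∑ a, ∑ c, (gTil x)⁻¹ a c * (w c * B x a b)) := by
      rw [hQ, Finset.mul_sum, Finset.mul_sum]
      apply Finset.sum_congr rfl; intro d _
      rw [hP, Finset.mul_sum]
      simp only [Finset.sum_mul]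
      rw [Finset.mul_sum]
      apply Finset.sum_congr rfl; intro l _
      calc φ x ^ (-(2:ℝ)) * ((gTil x)⁻¹ d l * u l * B x d b)
          = (gTil x)⁻¹ d l * ((φ x ^ (-(2:ℝ)) * u l) * B x d b) := by ring
        _ = (gTil x)⁻¹ d l * ((r * w l) * B x d b) := by rw [hsu l]
        _ = r * ((gTil x)⁻¹ d l * (w l * B x d b)) := by ring
    have hZ : ∑ a, ∑ c, (gTil x)⁻¹ a c * B x a c = 0 := hBtracefree x
    have hpow : (φ x ^ r)⁻¹ * φ x ^ (-(2:ℝ)) = φ x ^ (-(2:ℝ) - r) := by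
      have e1 : -(2:ℝ) - r = (-r) + (-(2:ℝ)) := by ring
      rw [e1, Real.rpow_add hφx, Real.rpow_neg (le_of_lt hφx) r]
    rw [hS0, hW2, htrace, hRR, hZ]
    linear_combination (divTensor gTil B x b) * hpow
      + ((φ x ^ r)⁻¹ * ((n:ℝ)+1)/2) * hsQ
      + ((φ x ^ r)⁻¹ * (∑ a, ∑ c, (gTil x)⁻¹ a c * (w c * B x a b))/2) * hrn
  refine ⟨main, fun x => ⟨fun h0 b => ?_, fun h0 b => ?_⟩⟩
  · have hm := main x b
    rw [h0 b] at hm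
    have hne : (φ x) ^ (-(2 : ℝ) - r) ≠ 0 := (Real.rpow_pos_of_pos (hφpos x) _).ne'
    exact ((mul_eq_zero.mp hm.symm).resolve_left hne)
  · rw [main x b, h0 b, mul_zero]

end
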